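/- For any smooth radial function F and any constants β₁, β₂, β₃, each of the three functions I₁₂, I₁₃, I₂₃ Poisson commutes with the Hamiltonian H = T + U at every point of D: {I₁₂, H} = {I₁₃, H} = {I₂₃, H} = 0. -/

import Mathlib

namespace Paper
noncomputable section

/-- The κ-dependent cosine Cκ(x) = ∑ (−κ)^l x^{2l}/(2l)!. -/
def Ck (κ x : ℝ) : ℝ := ∑' l : ℕ, (-κ) ^ l * x ^ (2 * l) / (Nat.factorial (2 * l) : ℝ)

/-- The κ-dependent sine Sκ(x) = ∑ (−κ)^l x^{2l+1}/(2l+1)!. -/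
def Sk (κ x : ℝ) : ℝ := ∑' l : ℕ, (-κ) ^ l * x ^ (2 * l + 1) / (Nat.factorial (2 * l + 1) : ℝ)

/-- The κ-dependent tangent Tκ(x) = Sκ(x)/Cκ(x). -/
def Tk (κ x : ℝ) : ℝ := Sk κ x / Ck κ x

/-- Phase space ℝ³ × ℝ³ ≃ ℝ⁶ with canonical coordinates
`(r, θ, φ, p_r, p_θ, p_φ) = (x 0, x 1, x 2, x 3, x 4, x 5)`. -/
abbrev Pt := Fin 6 → ℝ

/-- Partial derivative in the i-th coordinate direction. -/
def pd (f : Pt → ℝ) (i : Fin 6) (x : Pt) : ℝ := fderiv ℝ f x (Pi.single i 1)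

/-- Canonical Poisson bracket {f,g} = ∑_{q} (∂f/∂q ∂g/∂p_q − ∂g/∂q ∂f/∂p_q). -/
def pb (f g : Pt → ℝ) (x : Pt) : ℝ :=
  ∑ i : Fin 3,
    (pd f ⟨i.1, by omega⟩ x * pd g ⟨i.1 + 3, by omega⟩ x
      - pd g ⟨i.1, by omega⟩ x * pd f ⟨i.1 + 3, by omega⟩ x)

/-- Gradient of a function on phase space, as a vector in ℝ⁶. -/
def grad (f : Pt → ℝ) (x : Pt) : Fin 6 → ℝ := fun i => pd f i x

/-- The open domain D where Sκ₁(r), Cκ₁(r), Sκ₂(θ), Cκ₂(θ), cos φ, sin φ are nonzero. -/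
def D (κ₁ κ₂ : ℝ) : Set Pt :=
  {x | Sk κ₁ (x 0) ≠ 0 ∧ Ck κ₁ (x 0) ≠ 0 ∧ Sk κ₂ (x 1) ≠ 0 ∧ Ck κ₂ (x 1) ≠ 0 ∧
       Real.cos (x 2) ≠ 0 ∧ Real.sin (x 2) ≠ 0}

/-- J₀₁ = Cκ₂(θ)p_r − (Sκ₂(θ)/Tκ₁(r))p_θ. -/
def J01 (κ₁ κ₂ : ℝ) (x : Pt) : ℝ :=
  Ck κ₂ (x 1) * x 3 - (Sk κ₂ (x 1) / Tk κ₁ (x 0)) * x 4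

/-- J₀₂. -/
def J02 (κ₁ κ₂ : ℝ) (x : Pt) : ℝ :=
  κ₂ * Sk κ₂ (x 1) * Real.cos (x 2) * x 3
    + (Ck κ₂ (x 1) * Real.cos (x 2) / Tk κ₁ (x 0)) * x 4
    - (Real.sin (x 2) / (Tk κ₁ (x 0) * Sk κ₂ (x 1))) * x 5

/-- J₀₃. -/
def J03 (κ₁ κ₂ : ℝ) (x : Pt) : ℝ :=
  κ₂ * Sk κ₂ (x 1) * Real.sin (x 2) * x 3
    + (Ck κ₂ (x 1) * Real.sin (x 2) / Tk κ₁ (x 0)) * x 4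
    + (Real.cos (x 2) / (Tk κ₁ (x 0) * Sk κ₂ (x 1))) * x 5

/-- J₁₂ = cos φ·p_θ − (sin φ/Tκ₂(θ))p_φ. -/
def J12 (κ₂ : ℝ) (x : Pt) : ℝ :=
  Real.cos (x 2) * x 4 - (Real.sin (x 2) / Tk κ₂ (x 1)) * x 5

/-- J₁₃ = sin φ·p_θ + (cos φ/Tκ₂(θ))p_φ. -/
def J13 (κ₂ : ℝ) (x : Pt) : ℝ :=
  Real.sin (x 2) * x 4 + (Real.cos (x 2) / Tk κ₂ (x 1)) * x 5

/-- J₂₃ = p_φ. -/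
def J23 (x : Pt) : ℝ := x 5

/-- Kinetic energy T. -/
def Tkin (κ₁ κ₂ : ℝ) (x : Pt) : ℝ :=
  (1 / 2) * ((x 3) ^ 2 + (x 4) ^ 2 / (κ₂ * Sk κ₁ (x 0) ^ 2)
    + (x 5) ^ 2 / (κ₂ * Sk κ₁ (x 0) ^ 2 * Sk κ₂ (x 1) ^ 2))

/-- The superintegrable potential U with arbitrary radial function F. -/
def U (κ₁ κ₂ : ℝ) (F : ℝ → ℝ) (β₁ β₂ β₃ : ℝ) (x : Pt) : ℝ :=
  F (x 0) + (1 / Sk κ₁ (x 0) ^ 2) *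
    (β₁ / Ck κ₂ (x 1) ^ 2 + β₂ / (Sk κ₂ (x 1) ^ 2 * Real.cos (x 2) ^ 2)
      + β₃ / (Sk κ₂ (x 1) ^ 2 * Real.sin (x 2) ^ 2))

/-- Integral I₁₂. -/
def I12 (κ₂ β₁ β₂ : ℝ) (x : Pt) : ℝ :=
  (Real.cos (x 2) * x 4 - (Real.sin (x 2) / Tk κ₂ (x 1)) * x 5) ^ 2
    + 2 * β₁ * κ₂ ^ 2 * Tk κ₂ (x 1) ^ 2 * Real.cos (x 2) ^ 2
    + 2 * β₂ * κ₂ / (Tk κ₂ (x 1) ^ 2 * Real.cos (x 2) ^ 2)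

/-- Integral I₁₃. -/
def I13 (κ₂ β₁ β₃ : ℝ) (x : Pt) : ℝ :=
  (Real.sin (x 2) * x 4 + (Real.cos (x 2) / Tk κ₂ (x 1)) * x 5) ^ 2
    + 2 * β₁ * κ₂ ^ 2 * Tk κ₂ (x 1) ^ 2 * Real.sin (x 2) ^ 2
    + 2 * β₃ * κ₂ / (Tk κ₂ (x 1) ^ 2 * Real.sin (x 2) ^ 2)

/-- Integral I₂₃. -/
def I23 (κ₂ β₂ β₃ : ℝ) (x : Pt) : ℝ :=
  (x 5) ^ 2 + 2 * β₂ * κ₂ * Real.tan (x 2) ^ 2 + 2 * β₃ * κ₂ / Real.tan (x 2) ^ 2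

/-- Integral I₁₂₃. -/
def I123 (κ₂ β₁ β₂ β₃ : ℝ) (x : Pt) : ℝ :=
  (x 4) ^ 2 + (x 5) ^ 2 / Sk κ₂ (x 1) ^ 2 + 2 * β₁ * κ₂ / Ck κ₂ (x 1) ^ 2
    + 2 * β₂ * κ₂ / (Sk κ₂ (x 1) ^ 2 * Real.cos (x 2) ^ 2)
    + 2 * β₃ * κ₂ / (Sk κ₂ (x 1) ^ 2 * Real.sin (x 2) ^ 2)

/-- The Smorodinsky–Winternitz Hamiltonian H^SW. -/
def HSW (κ₁ κ₂ β₀ β₁ β₂ β₃ : ℝ) (x : Pt) : ℝ :=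
  Tkin κ₁ κ₂ x + β₀ * Tk κ₁ (x 0) ^ 2 + (1 / Sk κ₁ (x 0) ^ 2) *
    (β₁ / Ck κ₂ (x 1) ^ 2 + β₂ / (Sk κ₂ (x 1) ^ 2 * Real.cos (x 2) ^ 2)
      + β₃ / (Sk κ₂ (x 1) ^ 2 * Real.sin (x 2) ^ 2))

/-- Integral I₀₁ of H^SW. -/
def I01 (κ₁ κ₂ β₀ β₁ : ℝ) (x : Pt) : ℝ :=
  J01 κ₁ κ₂ x ^ 2 + 2 * β₀ * Tk κ₁ (x 0) ^ 2 * Ck κ₂ (x 1) ^ 2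
    + 2 * β₁ / (Tk κ₁ (x 0) ^ 2 * Ck κ₂ (x 1) ^ 2)

/-- Integral I₀₂ of H^SW. -/
def I02 (κ₁ κ₂ β₀ β₂ : ℝ) (x : Pt) : ℝ :=
  J02 κ₁ κ₂ x ^ 2 + 2 * β₀ * κ₂ ^ 2 * Tk κ₁ (x 0) ^ 2 * Sk κ₂ (x 1) ^ 2 * Real.cos (x 2) ^ 2
    + 2 * β₂ * κ₂ / (Tk κ₁ (x 0) ^ 2 * Sk κ₂ (x 1) ^ 2 * Real.cos (x 2) ^ 2)

/-- Integral I₀₃ of H^SW. -/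
def I03 (κ₁ κ₂ β₀ β₃ : ℝ) (x : Pt) : ℝ :=
  J03 κ₁ κ₂ x ^ 2 + 2 * β₀ * κ₂ ^ 2 * Tk κ₁ (x 0) ^ 2 * Sk κ₂ (x 1) ^ 2 * Real.sin (x 2) ^ 2
    + 2 * β₃ * κ₂ / (Tk κ₁ (x 0) ^ 2 * Sk κ₂ (x 1) ^ 2 * Real.sin (x 2) ^ 2)

/-- Generalized Kepler–Coulomb Hamiltonian H^GKC₁ = T + U^GKC₁. -/
def HGKC1 (κ₁ κ₂ k β₂ β₃ : ℝ) (x : Pt) : ℝ :=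
  Tkin κ₁ κ₂ x - k / Tk κ₁ (x 0)
    + (1 / (Sk κ₁ (x 0) ^ 2 * Sk κ₂ (x 1) ^ 2)) *
        (β₂ / Real.cos (x 2) ^ 2 + β₃ / Real.sin (x 2) ^ 2)

/-- Generalized Kepler–Coulomb Hamiltonian H^GKC₂ = T + U^GKC₂. -/
def HGKC2 (κ₁ κ₂ k β₁ β₃ : ℝ) (x : Pt) : ℝ :=
  Tkin κ₁ κ₂ x - k / Tk κ₁ (x 0)
    + (1 / Sk κ₁ (x 0) ^ 2) *
        (β₁ / Ck κ₂ (x 1) ^ 2 + β₃ / (Sk κ₂ (x 1) ^ 2 * Real.sin (x 2) ^ 2))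

/-- Generalized Kepler–Coulomb Hamiltonian H^GKC₃ = T + U^GKC₃. -/
def HGKC3 (κ₁ κ₂ k β₁ β₂ : ℝ) (x : Pt) : ℝ :=
  Tkin κ₁ κ₂ x - k / Tk κ₁ (x 0)
    + (1 / Sk κ₁ (x 0) ^ 2) *
        (β₁ / Ck κ₂ (x 1) ^ 2 + β₂ / (Sk κ₂ (x 1) ^ 2 * Real.cos (x 2) ^ 2))

/-- The function L₁. -/
def L1 (κ₁ κ₂ k β₂ β₃ : ℝ) (x : Pt) : ℝ :=
  -(J02 κ₁ κ₂ x * J12 κ₂ x) - J03 κ₁ κ₂ x * J13 κ₂ x + k * κ₂ * Ck κ₂ (x 1)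
    - (2 * κ₂ * Ck κ₂ (x 1) / (Tk κ₁ (x 0) * Sk κ₂ (x 1) ^ 2)) *
        (β₂ / Real.cos (x 2) ^ 2 + β₃ / Real.sin (x 2) ^ 2)

/-- The function L₂. -/
def L2 (κ₁ κ₂ k β₁ β₃ : ℝ) (x : Pt) : ℝ :=
  J01 κ₁ κ₂ x * J12 κ₂ x - J03 κ₁ κ₂ x * J23 x + k * κ₂ * Sk κ₂ (x 1) * Real.cos (x 2)
    - (2 * κ₂ * Real.cos (x 2) / Tk κ₁ (x 0)) *
        (β₁ * Sk κ₂ (x 1) / Ck κ₂ (x 1) ^ 2 + β₃ / (Sk κ₂ (x 1) * Real.sin (x 2) ^ 2))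

/-- The function L₃. -/
def L3 (κ₁ κ₂ k β₁ β₂ : ℝ) (x : Pt) : ℝ :=
  J01 κ₁ κ₂ x * J13 κ₂ x + J02 κ₁ κ₂ x * J23 x + k * κ₂ * Sk κ₂ (x 1) * Real.sin (x 2)
    - (2 * κ₂ * Real.sin (x 2) / Tk κ₁ (x 0)) *
        (β₁ * Sk κ₂ (x 1) / Ck κ₂ (x 1) ^ 2 + β₂ / (Sk κ₂ (x 1) * Real.cos (x 2) ^ 2))


/-! ### Auxiliary lemmas -/

def csq (κ : ℝ) : ℂ := if 0 ≤ κ then (Real.sqrt κ : ℂ) else (Real.sqrt (-κ) : ℂ) * Complex.I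

lemma csq_sq (κ : ℝ) : (csq κ) ^ 2 = (κ : ℂ) := by
  unfold csq
  split_ifs with h
  · rw [← Complex.ofReal_pow, Real.sq_sqrt h]
  · rw [mul_pow, Complex.I_sq, ← Complex.ofReal_pow, Real.sq_sqrt (by linarith)]
    push_cast; ring

lemma Ck_complex (κ x : ℝ) : (Ck κ x : ℂ) = Complex.cos (csq κ * x) := by
  rw [Complex.cos_eq_tsum, Ck, Complex.ofReal_tsum]
  refine tsum_congr fun n => ?_
  push_cast
  rw [mul_pow, pow_mul (csq κ) 2 n, csq_sq, neg_pow]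
  ring

lemma Sk_complex (κ x : ℝ) : csq κ * (Sk κ x : ℂ) = Complex.sin (csq κ * x) := by
  rw [Complex.sin_eq_tsum, Sk, Complex.ofReal_tsum, ← tsum_mul_left]
  refine tsum_congr fun n => ?_
  push_cast
  rw [mul_pow, pow_succ (csq κ) (2*n), pow_mul (csq κ) 2 n, csq_sq, neg_pow]
  ring

lemma Ck_sq_add (κ x : ℝ) : Ck κ x ^ 2 + κ * Sk κ x ^ 2 = 1 := by
  have h : ((Ck κ x ^ 2 + κ * Sk κ x ^ 2 : ℝ) : ℂ) = 1 := by
    push_cast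
    rw [Ck_complex, ← csq_sq κ, ← mul_pow, Sk_complex, Complex.cos_sq_add_sin_sq]
  exact_mod_cast h

lemma Ck_zero (x : ℝ) : Ck 0 x = 1 := by
  rw [Ck, tsum_eq_single 0 (fun n hn => by simp [zero_pow hn])]
  simp

lemma Sk_zero (x : ℝ) : Sk 0 x = x := by
  rw [Sk, tsum_eq_single 0 (fun n hn => by simp [zero_pow hn])]
  simp

lemma hasDerivAt_Sk (κ x : ℝ) : HasDerivAt (Sk κ) (Ck κ x) x := by
  by_cases hκ : κ = 0
  · subst hκ
    have h : Sk 0 = fun y : ℝ => y := funext Sk_zero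
    rw [h, Ck_zero]
    exact hasDerivAt_id x
  · have hC : csq κ ≠ 0 := fun h => hκ (by have := csq_sq κ; rw [h] at this; simpa using this.symm)
    have key : Sk κ = fun y : ℝ => (Complex.sin (csq κ * y) / csq κ).re := by
      funext y
      rw [← Sk_complex, mul_div_cancel_left₀ _ hC, Complex.ofReal_re]
    rw [key]
    have h1 : HasDerivAt (fun z : ℂ => csq κ * z) (csq κ * 1) (x : ℂ) :=
      (hasDerivAt_id (x : ℂ)).const_mul (csq κ)
    have h2 : HasDerivAt (fun z : ℂ => Complex.sin (csq κ * z) / csq κ)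
        ((Complex.cos (csq κ * x) * (csq κ * 1)) / csq κ) (x : ℂ) :=
      (((Complex.hasDerivAt_sin (csq κ * x)).comp (x : ℂ) h1)).div_const (csq κ)
    have h3 := h2.real_of_complex
    convert h3 using 1
    rw [mul_one, mul_div_assoc, div_self hC, mul_one]
    conv_rhs => rw [← Ck_complex, Complex.ofReal_re]

lemma hasDerivAt_Ck (κ x : ℝ) : HasDerivAt (Ck κ) (-(κ * Sk κ x)) x := by
  by_cases hκ : κ = 0
  · subst hκ
    have h : Ck 0 = fun _ : ℝ => (1 : ℝ) := funext Ck_zero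
    rw [h]
    simpa using hasDerivAt_const x (1 : ℝ)
  · have key : Ck κ = fun y : ℝ => (Complex.cos (csq κ * y)).re := by
      funext y; rw [← Ck_complex, Complex.ofReal_re]
    rw [key]
    have h1 : HasDerivAt (fun z : ℂ => csq κ * z) (csq κ * 1) (x : ℂ) :=
      (hasDerivAt_id (x : ℂ)).const_mul (csq κ)
    have h2 : HasDerivAt (fun z : ℂ => Complex.cos (csq κ * z))
        (-Complex.sin (csq κ * x) * (csq κ * 1)) (x : ℂ) :=
      (Complex.hasDerivAt_cos (csq κ * x)).comp (x : ℂ) h1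
    have h3 := h2.real_of_complex
    convert h3 using 1
    have : -Complex.sin (csq κ * x) * (csq κ * 1) = ((-(κ * Sk κ x) : ℝ) : ℂ) := by
      rw [← Sk_complex]; push_cast; rw [← csq_sq κ]; ring
    rw [this, Complex.ofReal_re]

lemma hasDerivAt_Tk {κ x : ℝ} (hc : Ck κ x ≠ 0) : HasDerivAt (Tk κ) (1 / Ck κ x ^ 2) x := by
  have h := (hasDerivAt_Sk κ x).div (hasDerivAt_Ck κ x) hc
  have e : (Ck κ x * Ck κ x - Sk κ x * -(κ * Sk κ x)) / Ck κ x ^ 2 = 1 / Ck κ x ^ 2 := by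
    rw [show Ck κ x * Ck κ x - Sk κ x * -(κ * Sk κ x) = Ck κ x ^ 2 + κ * Sk κ x ^ 2 by ring,
      Ck_sq_add]
  rw [← e]
  exact h


lemma pd_eq {x : Pt} {f : Pt → ℝ} {L : Pt →L[ℝ] ℝ} (h : HasFDerivAt f L x) (i : Fin 6) :
    pd f i x = L (Pi.single i 1) := by rw [pd, h.fderiv]

lemma pb_eq (f g : Pt → ℝ) (x : Pt) :
    pb f g x = (pd f 0 x * pd g 3 x - pd g 0 x * pd f 3 x)
      + (pd f 1 x * pd g 4 x - pd g 1 x * pd f 4 x)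
      + (pd f 2 x * pd g 5 x - pd g 2 x * pd f 5 x) := by
  simp [pb, Fin.sum_univ_three]
  ring

lemma hproj (x : Pt) (i : Fin 6) :
    HasFDerivAt (fun y : Pt => y i) (ContinuousLinearMap.proj (R := ℝ) (φ := fun _ : Fin 6 => ℝ) i) x :=
  (ContinuousLinearMap.proj (R := ℝ) (φ := fun _ : Fin 6 => ℝ) i).hasFDerivAt

lemma hcomp {x : Pt} {g : ℝ → ℝ} {g' : ℝ} {i : Fin 6} (h : HasDerivAt g g' (x i)) :
    HasFDerivAt (fun y : Pt => g (y i))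
      (g' • ContinuousLinearMap.proj (R := ℝ) (φ := fun _ : Fin 6 => ℝ) i) x :=
  h.comp_hasFDerivAt x (hproj x i)

lemma hpow {x : Pt} {f : Pt → ℝ} {L : Pt →L[ℝ] ℝ} (h : HasFDerivAt f L x) (n : ℕ) :
    HasFDerivAt (fun y => f y ^ n) (((n : ℝ) * f x ^ (n - 1)) • L) x :=
  (hasDerivAt_pow n (f x)).comp_hasFDerivAt x h

lemma hinv {x : Pt} {f : Pt → ℝ} {L : Pt →L[ℝ] ℝ} (h : HasFDerivAt f L x) (hf : f x ≠ 0) :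
    HasFDerivAt (fun y => (f y)⁻¹) ((-(f x ^ 2)⁻¹) • L) x :=
  (hasDerivAt_inv hf).comp_hasFDerivAt x h

set_option maxHeartbeats 2000000 in
lemma bracket23 (κ₁ κ₂ : ℝ) (hκ₂ : κ₂ ≠ 0) (F : ℝ → ℝ) (hF : ContDiff ℝ (⊤ : ℕ∞) F)
    (β₁ β₂ β₃ : ℝ) (x : Pt) (hx : x ∈ D κ₁ κ₂) :
    pb (I23 κ₂ β₂ β₃) (fun y => Tkin κ₁ κ₂ y + U κ₁ κ₂ F β₁ β₂ β₃ y) x = 0 := by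
  obtain ⟨ha, hb, hs, hc, hu, hv⟩ := hx
  have htn : Real.tan (x 2) ≠ 0 := by
    rw [Real.tan_eq_sin_div_cos]; exact div_ne_zero hv hu
  -- atoms
  have hS1 := hcomp (x := x) (i := 0) (hasDerivAt_Sk κ₁ (x 0))
  have hS2 := hcomp (x := x) (i := 1) (hasDerivAt_Sk κ₂ (x 1))
  have hC2 := hcomp (x := x) (i := 1) (hasDerivAt_Ck κ₂ (x 1))
  have hco := hcomp (x := x) (i := 2) (Real.hasDerivAt_cos (x 2))
  have hsi := hcomp (x := x) (i := 2) (Real.hasDerivAt_sin (x 2))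
  have htg := hcomp (x := x) (i := 2) (Real.hasDerivAt_tan hu)
  have hFc := hcomp (x := x) (i := 0) ((hF.differentiable (by simp) (x 0)).hasDerivAt)
  -- nonzero
  have n1 : κ₂ * Sk κ₁ (x 0) ^ 2 ≠ 0 := mul_ne_zero hκ₂ (pow_ne_zero 2 ha)
  have n2 : κ₂ * Sk κ₁ (x 0) ^ 2 * Sk κ₂ (x 1) ^ 2 ≠ 0 := mul_ne_zero n1 (pow_ne_zero 2 hs)
  have n3 : Sk κ₁ (x 0) ^ 2 ≠ 0 := pow_ne_zero 2 ha
  have n4 : Ck κ₂ (x 1) ^ 2 ≠ 0 := pow_ne_zero 2 hc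
  have n5 : Sk κ₂ (x 1) ^ 2 * Real.cos (x 2) ^ 2 ≠ 0 :=
    mul_ne_zero (pow_ne_zero 2 hs) (pow_ne_zero 2 hu)
  have n6 : Sk κ₂ (x 1) ^ 2 * Real.sin (x 2) ^ 2 ≠ 0 :=
    mul_ne_zero (pow_ne_zero 2 hs) (pow_ne_zero 2 hv)
  have n7 : Real.tan (x 2) ^ 2 ≠ 0 := pow_ne_zero 2 htn
  -- H
  have hH : (fun y => Tkin κ₁ κ₂ y + U κ₁ κ₂ F β₁ β₂ β₃ y)
      = (fun y : Pt => 1 * 2⁻¹ * (y 3 ^ 2 + y 4 ^ 2 * (κ₂ * Sk κ₁ (y 0) ^ 2)⁻¹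
          + y 5 ^ 2 * (κ₂ * Sk κ₁ (y 0) ^ 2 * Sk κ₂ (y 1) ^ 2)⁻¹)
        + (F (y 0) + 1 * (Sk κ₁ (y 0) ^ 2)⁻¹ *
            (β₁ * (Ck κ₂ (y 1) ^ 2)⁻¹ + β₂ * (Sk κ₂ (y 1) ^ 2 * Real.cos (y 2) ^ 2)⁻¹
              + β₃ * (Sk κ₂ (y 1) ^ 2 * Real.sin (y 2) ^ 2)⁻¹))) := by
    funext y; simp only [Tkin, U, div_eq_mul_inv]
  have hI : I23 κ₂ β₂ β₃
      = (fun y : Pt => y 5 ^ 2 + 2 * β₂ * κ₂ * Real.tan (y 2) ^ 2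
          + 2 * β₃ * κ₂ * (Real.tan (y 2) ^ 2)⁻¹) := by
    funext y; simp only [I23, div_eq_mul_inv]
  rw [pb_eq, hH, hI]
  have BH := ((((hpow (hproj x 3) 2).add ((hpow (hproj x 4) 2).mul
        (hinv ((hpow hS1 2).const_mul κ₂) n1))).add ((hpow (hproj x 5) 2).mul
        (hinv (((hpow hS1 2).const_mul κ₂).mul (hpow hS2 2)) n2))).const_mul (1 * (2:ℝ)⁻¹)).add
      (hFc.add (((hinv (hpow hS1 2) n3).const_mul 1).mul
        ((((hinv (hpow hC2 2) n4).const_mul β₁).add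
          ((hinv ((hpow hS2 2).mul (hpow hco 2)) n5).const_mul β₂)).add
          ((hinv ((hpow hS2 2).mul (hpow hsi 2)) n6).const_mul β₃))))
  have BI := ((hpow (hproj x 5) 2).add ((hpow htg 2).const_mul (2*β₂*κ₂))).add
      ((hinv (hpow htg 2) n7).const_mul (2*β₃*κ₂))
  erw [pd_eq BH, pd_eq BH, pd_eq BH, pd_eq BH, pd_eq BH, pd_eq BH,
    pd_eq BI, pd_eq BI, pd_eq BI, pd_eq BI, pd_eq BI, pd_eq BI]
  simp only [ContinuousLinearMap.add_apply, ContinuousLinearMap.coe_smul', Pi.smul_apply,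
    ContinuousLinearMap.proj_apply, ContinuousLinearMap.smul_apply,
    ContinuousLinearMap.sub_apply, smul_eq_mul, Pi.single_apply]
  simp only [Fin.reduceEq, if_true, if_false, reduceIte]
  norm_num
  rw [Real.tan_eq_sin_div_cos]
  field_simp
  ring

set_option maxHeartbeats 2000000 in
lemma bracket12 (κ₁ κ₂ : ℝ) (hκ₂ : κ₂ ≠ 0) (F : ℝ → ℝ) (hF : ContDiff ℝ (⊤ : ℕ∞) F)
    (β₁ β₂ β₃ : ℝ) (x : Pt) (hx : x ∈ D κ₁ κ₂) :
    pb (I12 κ₂ β₁ β₂) (fun y => Tkin κ₁ κ₂ y + U κ₁ κ₂ F β₁ β₂ β₃ y) x = 0 := by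
  obtain ⟨ha, hb, hs, hc, hu, hv⟩ := hx
  have hT : Tk κ₂ (x 1) ≠ 0 := div_ne_zero hs hc
  -- atoms
  have hS1 := hcomp (x := x) (i := 0) (hasDerivAt_Sk κ₁ (x 0))
  have hS2 := hcomp (x := x) (i := 1) (hasDerivAt_Sk κ₂ (x 1))
  have hC2 := hcomp (x := x) (i := 1) (hasDerivAt_Ck κ₂ (x 1))
  have hco := hcomp (x := x) (i := 2) (Real.hasDerivAt_cos (x 2))
  have hsi := hcomp (x := x) (i := 2) (Real.hasDerivAt_sin (x 2))
  have hT2 := hcomp (x := x) (i := 1) (hasDerivAt_Tk (κ := κ₂) hc)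
  have hFc := hcomp (x := x) (i := 0) ((hF.differentiable (by simp) (x 0)).hasDerivAt)
  -- nonzero
  have n1 : κ₂ * Sk κ₁ (x 0) ^ 2 ≠ 0 := mul_ne_zero hκ₂ (pow_ne_zero 2 ha)
  have n2 : κ₂ * Sk κ₁ (x 0) ^ 2 * Sk κ₂ (x 1) ^ 2 ≠ 0 := mul_ne_zero n1 (pow_ne_zero 2 hs)
  have n3 : Sk κ₁ (x 0) ^ 2 ≠ 0 := pow_ne_zero 2 ha
  have n4 : Ck κ₂ (x 1) ^ 2 ≠ 0 := pow_ne_zero 2 hc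
  have n5 : Sk κ₂ (x 1) ^ 2 * Real.cos (x 2) ^ 2 ≠ 0 :=
    mul_ne_zero (pow_ne_zero 2 hs) (pow_ne_zero 2 hu)
  have n6 : Sk κ₂ (x 1) ^ 2 * Real.sin (x 2) ^ 2 ≠ 0 :=
    mul_ne_zero (pow_ne_zero 2 hs) (pow_ne_zero 2 hv)
  have n7 : Tk κ₂ (x 1) ^ 2 * Real.cos (x 2) ^ 2 ≠ 0 :=
    mul_ne_zero (pow_ne_zero 2 hT) (pow_ne_zero 2 hu)
  have hH : (fun y => Tkin κ₁ κ₂ y + U κ₁ κ₂ F β₁ β₂ β₃ y)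
      = (fun y : Pt => 1 * 2⁻¹ * (y 3 ^ 2 + y 4 ^ 2 * (κ₂ * Sk κ₁ (y 0) ^ 2)⁻¹
          + y 5 ^ 2 * (κ₂ * Sk κ₁ (y 0) ^ 2 * Sk κ₂ (y 1) ^ 2)⁻¹)
        + (F (y 0) + 1 * (Sk κ₁ (y 0) ^ 2)⁻¹ *
            (β₁ * (Ck κ₂ (y 1) ^ 2)⁻¹ + β₂ * (Sk κ₂ (y 1) ^ 2 * Real.cos (y 2) ^ 2)⁻¹
              + β₃ * (Sk κ₂ (y 1) ^ 2 * Real.sin (y 2) ^ 2)⁻¹))) := by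
    funext y; simp only [Tkin, U, div_eq_mul_inv]
  have hI : I12 κ₂ β₁ β₂
      = (fun y : Pt => (Real.cos (y 2) * y 4 - Real.sin (y 2) * (Tk κ₂ (y 1))⁻¹ * y 5) ^ 2
          + 2 * β₁ * κ₂ ^ 2 * Tk κ₂ (y 1) ^ 2 * Real.cos (y 2) ^ 2
          + 2 * β₂ * κ₂ * (Tk κ₂ (y 1) ^ 2 * Real.cos (y 2) ^ 2)⁻¹) := by
    funext y; simp only [I12, div_eq_mul_inv]
  rw [pb_eq, hH, hI]
  have BH := ((((hpow (hproj x 3) 2).add ((hpow (hproj x 4) 2).mul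
        (hinv ((hpow hS1 2).const_mul κ₂) n1))).add ((hpow (hproj x 5) 2).mul
        (hinv (((hpow hS1 2).const_mul κ₂).mul (hpow hS2 2)) n2))).const_mul (1 * (2:ℝ)⁻¹)).add
      (hFc.add (((hinv (hpow hS1 2) n3).const_mul 1).mul
        ((((hinv (hpow hC2 2) n4).const_mul β₁).add
          ((hinv ((hpow hS2 2).mul (hpow hco 2)) n5).const_mul β₂)).add
          ((hinv ((hpow hS2 2).mul (hpow hsi 2)) n6).const_mul β₃))))
  have BI := ((hpow ((hco.mul (hproj x 4)).sub ((hsi.mul (hinv hT2 hT)).mul (hproj x 5))) 2).add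
      (((hpow hT2 2).const_mul (2*β₁*κ₂^2)).mul (hpow hco 2))).add
      ((hinv ((hpow hT2 2).mul (hpow hco 2)) n7).const_mul (2*β₂*κ₂))
  erw [pd_eq BH, pd_eq BH, pd_eq BH, pd_eq BH, pd_eq BH, pd_eq BH,
    pd_eq BI, pd_eq BI, pd_eq BI, pd_eq BI, pd_eq BI, pd_eq BI]
  simp only [ContinuousLinearMap.add_apply, ContinuousLinearMap.coe_smul', Pi.smul_apply,
    ContinuousLinearMap.proj_apply, ContinuousLinearMap.smul_apply,
    ContinuousLinearMap.sub_apply, smul_eq_mul, Pi.single_apply]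
  simp only [Fin.reduceEq, if_true, if_false, reduceIte]
  norm_num
  simp only [Tk]
  have hpy : Real.sin (x 2) ^ 2 + Real.cos (x 2) ^ 2 = 1 := Real.sin_sq_add_cos_sq _
  field_simp
  linear_combination (4 * β₂ * κ₂ * Ck κ₂ (x 1) ^ 4 * Real.sin (x 2) ^ 2
    * (Real.cos (x 2) * Sk κ₂ (x 1) * x 4 - Ck κ₂ (x 1) * Real.sin (x 2) * x 5)) * hpy

set_option maxHeartbeats 2000000 in
lemma bracket13 (κ₁ κ₂ : ℝ) (hκ₂ : κ₂ ≠ 0) (F : ℝ → ℝ) (hF : ContDiff ℝ (⊤ : ℕ∞) F)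
    (β₁ β₂ β₃ : ℝ) (x : Pt) (hx : x ∈ D κ₁ κ₂) :
    pb (I13 κ₂ β₁ β₃) (fun y => Tkin κ₁ κ₂ y + U κ₁ κ₂ F β₁ β₂ β₃ y) x = 0 := by
  obtain ⟨ha, hb, hs, hc, hu, hv⟩ := hx
  have hT : Tk κ₂ (x 1) ≠ 0 := div_ne_zero hs hc
  have hS1 := hcomp (x := x) (i := 0) (hasDerivAt_Sk κ₁ (x 0))
  have hS2 := hcomp (x := x) (i := 1) (hasDerivAt_Sk κ₂ (x 1))
  have hC2 := hcomp (x := x) (i := 1) (hasDerivAt_Ck κ₂ (x 1))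
  have hco := hcomp (x := x) (i := 2) (Real.hasDerivAt_cos (x 2))
  have hsi := hcomp (x := x) (i := 2) (Real.hasDerivAt_sin (x 2))
  have hT2 := hcomp (x := x) (i := 1) (hasDerivAt_Tk (κ := κ₂) hc)
  have hFc := hcomp (x := x) (i := 0) ((hF.differentiable (by simp) (x 0)).hasDerivAt)
  have n1 : κ₂ * Sk κ₁ (x 0) ^ 2 ≠ 0 := mul_ne_zero hκ₂ (pow_ne_zero 2 ha)
  have n2 : κ₂ * Sk κ₁ (x 0) ^ 2 * Sk κ₂ (x 1) ^ 2 ≠ 0 := mul_ne_zero n1 (pow_ne_zero 2 hs)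
  have n3 : Sk κ₁ (x 0) ^ 2 ≠ 0 := pow_ne_zero 2 ha
  have n4 : Ck κ₂ (x 1) ^ 2 ≠ 0 := pow_ne_zero 2 hc
  have n5 : Sk κ₂ (x 1) ^ 2 * Real.cos (x 2) ^ 2 ≠ 0 :=
    mul_ne_zero (pow_ne_zero 2 hs) (pow_ne_zero 2 hu)
  have n6 : Sk κ₂ (x 1) ^ 2 * Real.sin (x 2) ^ 2 ≠ 0 :=
    mul_ne_zero (pow_ne_zero 2 hs) (pow_ne_zero 2 hv)
  have n7 : Tk κ₂ (x 1) ^ 2 * Real.sin (x 2) ^ 2 ≠ 0 :=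
    mul_ne_zero (pow_ne_zero 2 hT) (pow_ne_zero 2 hv)
  have hH : (fun y => Tkin κ₁ κ₂ y + U κ₁ κ₂ F β₁ β₂ β₃ y)
      = (fun y : Pt => 1 * 2⁻¹ * (y 3 ^ 2 + y 4 ^ 2 * (κ₂ * Sk κ₁ (y 0) ^ 2)⁻¹
          + y 5 ^ 2 * (κ₂ * Sk κ₁ (y 0) ^ 2 * Sk κ₂ (y 1) ^ 2)⁻¹)
        + (F (y 0) + 1 * (Sk κ₁ (y 0) ^ 2)⁻¹ *
            (β₁ * (Ck κ₂ (y 1) ^ 2)⁻¹ + β₂ * (Sk κ₂ (y 1) ^ 2 * Real.cos (y 2) ^ 2)⁻¹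
              + β₃ * (Sk κ₂ (y 1) ^ 2 * Real.sin (y 2) ^ 2)⁻¹))) := by
    funext y; simp only [Tkin, U, div_eq_mul_inv]
  have hI : I13 κ₂ β₁ β₃
      = (fun y : Pt => (Real.sin (y 2) * y 4 + Real.cos (y 2) * (Tk κ₂ (y 1))⁻¹ * y 5) ^ 2
          + 2 * β₁ * κ₂ ^ 2 * Tk κ₂ (y 1) ^ 2 * Real.sin (y 2) ^ 2
          + 2 * β₃ * κ₂ * (Tk κ₂ (y 1) ^ 2 * Real.sin (y 2) ^ 2)⁻¹) := by
    funext y; simp only [I13, div_eq_mul_inv]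
  rw [pb_eq, hH, hI]
  have BH := ((((hpow (hproj x 3) 2).add ((hpow (hproj x 4) 2).mul
        (hinv ((hpow hS1 2).const_mul κ₂) n1))).add ((hpow (hproj x 5) 2).mul
        (hinv (((hpow hS1 2).const_mul κ₂).mul (hpow hS2 2)) n2))).const_mul (1 * (2:ℝ)⁻¹)).add
      (hFc.add (((hinv (hpow hS1 2) n3).const_mul 1).mul
        ((((hinv (hpow hC2 2) n4).const_mul β₁).add
          ((hinv ((hpow hS2 2).mul (hpow hco 2)) n5).const_mul β₂)).add
          ((hinv ((hpow hS2 2).mul (hpow hsi 2)) n6).const_mul β₃))))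
  have BI := ((hpow ((hsi.mul (hproj x 4)).add ((hco.mul (hinv hT2 hT)).mul (hproj x 5))) 2).add
      (((hpow hT2 2).const_mul (2*β₁*κ₂^2)).mul (hpow hsi 2))).add
      ((hinv ((hpow hT2 2).mul (hpow hsi 2)) n7).const_mul (2*β₃*κ₂))
  erw [pd_eq BH, pd_eq BH, pd_eq BH, pd_eq BH, pd_eq BH, pd_eq BH,
    pd_eq BI, pd_eq BI, pd_eq BI, pd_eq BI, pd_eq BI, pd_eq BI]
  simp only [ContinuousLinearMap.add_apply, ContinuousLinearMap.coe_smul', Pi.smul_apply,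
    ContinuousLinearMap.proj_apply, ContinuousLinearMap.smul_apply,
    ContinuousLinearMap.sub_apply, smul_eq_mul, Pi.single_apply]
  simp only [Fin.reduceEq, if_true, if_false, reduceIte]
  norm_num
  simp only [Tk]
  have hpy : Real.sin (x 2) ^ 2 + Real.cos (x 2) ^ 2 = 1 := Real.sin_sq_add_cos_sq _
  field_simp
  linear_combination (4 * β₃ * κ₂ * Ck κ₂ (x 1) ^ 4 * Real.cos (x 2) ^ 2
    * (Real.sin (x 2) * Sk κ₂ (x 1) * x 4 + Ck κ₂ (x 1) * Real.cos (x 2) * x 5)) * hpy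

/-- for any smooth radial function F and any constants β₁, β₂, β₃,
each of I₁₂, I₁₃, I₂₃ Poisson commutes with H = T + U at every point of D. -/
theorem integrals_commute_with_hamiltonian (κ₁ κ₂ : ℝ) (hκ₂ : κ₂ ≠ 0)
    (F : ℝ → ℝ) (hF : ContDiff ℝ (⊤ : ℕ∞) F) (β₁ β₂ β₃ : ℝ) :
    ∀ x ∈ D κ₁ κ₂,
      pb (I12 κ₂ β₁ β₂) (fun y => Tkin κ₁ κ₂ y + U κ₁ κ₂ F β₁ β₂ β₃ y) x = 0 ∧
      pb (I13 κ₂ β₁ β₃) (fun y => Tkin κ₁ κ₂ y + U κ₁ κ₂ F β₁ β₂ β₃ y) x = 0 ∧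
      pb (I23 κ₂ β₂ β₃) (fun y => Tkin κ₁ κ₂ y + U κ₁ κ₂ F β₁ β₂ β₃ y) x = 0 :=
  fun x hx => ⟨bracket12 κ₁ κ₂ hκ₂ F hF β₁ β₂ β₃ x hx, bracket13 κ₁ κ₂ hκ₂ F hF β₁ β₂ β₃ x hx,
    bracket23 κ₁ κ₂ hκ₂ F hF β₁ β₂ β₃ x hx⟩

end
end Paper
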